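/- With notation as above, lim_{n→∞} (inf_{z∈𝔻} |u_n(z)|)^{1/n} ≥ min{A⁻, B⁻}, where A⁻ = liminf_{z→a} |u(z)| and B⁻ = liminf_{z→b} |u(z)|. -/

import Mathlib

open Complex Filter Metric Set

noncomputable section

/-- A hyperbolic automorphism of the open unit disc `𝔻`, with attractive fixed
point `a` and repulsive fixed point `b` on the unit circle, and (real) derivative
values `da = ψ'(a) ∈ (0,1)`, `db = ψ'(b) ∈ (1,∞)` with `da * db = 1`. -/
structure HypAuto where
  ψ : ℂ → ℂ
  a : ℂ
  b : ℂ
  da : ℝ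
  db : ℝ
  ha : ‖a‖ = 1
  hb : ‖b‖ = 1
  hab : a ≠ b
  holo : ∃ R > 1, DifferentiableOn ℂ ψ (ball (0:ℂ) R)
  bij : BijOn ψ (ball (0:ℂ) 1) (ball (0:ℂ) 1)
  noFix : ∀ z ∈ ball (0:ℂ) 1, ψ z ≠ z
  fixa : ψ a = a
  fixb : ψ b = b
  hda : deriv ψ a = (da : ℂ)
  hdb : deriv ψ b = (db : ℂ)
  hda1 : 0 < da ∧ da < 1
  hdb1 : 1 < db
  hmulder : da * db = 1
  attract : ∀ z ∈ ball (0:ℂ) 1, Tendsto (fun n => ψ^[n] z) atTop (nhds a)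

/-!
The infima `v n = inf_𝔻 |u_n|` are supermultiplicative, because `u_{m+n} = u_m · (u_n ∘ ψ_m)`,
so `v n ^ (1/n)` converges by Fekete's lemma.

For the lower bound, Julia's lemma at the attracting point `a` (for `ψ`) and at the repelling
point `b` (for `ψ⁻¹`, which is holomorphic because an injective holomorphic map has non-vanishing
derivative) shows that the ratio `|b - z| / |a - z|` grows at least by the factor
`db > 1` at each step of an orbit. It is at least `δ / 2` off the `δ`-neighbourhood of `b` and at
most `2 / δ` off that of `a`, so every orbit spends at most `M = M(δ)` steps outside both
neighbourhoods. Choosing them so that `|u| > ρ` there, for a given `ρ < min A⁻ B⁻`, gives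
`v n ≥ K ρ ^ n` with `K = min (c / ρ) 1 ^ M`, where `c > 0` bounds `|u|` below; hence the limit
is at least `ρ`.
-/

open scoped ComplexConjugate Topology

def mobius (w z : ℂ) : ℂ := (w - z) / (1 - conj w * z)

lemma one_sub_conj_mul_ne_zero {w z : ℂ} (hw : ‖w‖ < 1) (hz : ‖z‖ ≤ 1) :
    1 - conj w * z ≠ 0 := by
  refine sub_ne_zero.2 fun h => ?_
  have : ‖conj w * z‖ < 1 := by
    rw [norm_mul, Complex.norm_conj]
    nlinarith [norm_nonneg w]
  rw [← h, norm_one] at this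
  exact lt_irrefl _ this

lemma norm_one_sub_conj_mul_sq (w z : ℂ) :
    ‖1 - conj w * z‖ ^ 2 = ‖w - z‖ ^ 2 + (1 - ‖w‖ ^ 2) * (1 - ‖z‖ ^ 2) := by
  simp only [← Complex.normSq_eq_norm_sq, Complex.normSq_apply, sub_re, one_re, mul_re, conj_re,
    conj_im, sub_im, one_im, mul_im]
  ring

lemma norm_mobius_lt_one {w z : ℂ} (hw : ‖w‖ < 1) (hz : ‖z‖ < 1) : ‖mobius w z‖ < 1 := by
  rw [mobius, norm_div, div_lt_one (norm_pos_iff.2 (one_sub_conj_mul_ne_zero hw hz.le))]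
  have hw' : 0 < 1 - ‖w‖ ^ 2 := by nlinarith [norm_nonneg w]
  have hz' : 0 < 1 - ‖z‖ ^ 2 := by nlinarith [norm_nonneg z]
  refine lt_of_pow_lt_pow_left₀ 2 (norm_nonneg _) ?_
  rw [norm_one_sub_conj_mul_sq]
  nlinarith [mul_pos hw' hz']

lemma mobius_zero (w : ℂ) : mobius w 0 = w := by simp [mobius]

lemma mobius_self (w : ℂ) : mobius w w = 0 := by simp [mobius]

lemma mobius_mobius {w z : ℂ} (hw : ‖w‖ < 1) (hz : ‖z‖ < 1) : mobius w (mobius w z) = z := by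
  have h₁ := one_sub_conj_mul_ne_zero hw hz.le
  have h₂ := one_sub_conj_mul_ne_zero hw hw.le
  have e₁ : w - (w - z) / (1 - conj w * z) = z * (1 - conj w * w) / (1 - conj w * z) := by
    rw [eq_div_iff h₁, sub_mul, div_mul_cancel₀ _ h₁]
    ring
  have e₂ : 1 - conj w * ((w - z) / (1 - conj w * z)) = (1 - conj w * w) / (1 - conj w * z) := by
    rw [eq_div_iff h₁, sub_mul, mul_assoc, div_mul_cancel₀ _ h₁]
    ring
  rw [mobius, mobius, e₁, e₂, div_div_div_cancel_right₀ h₁, mul_div_cancel_right₀ _ h₂]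

lemma mapsTo_mobius {w : ℂ} (hw : ‖w‖ < 1) : MapsTo (mobius w) (ball 0 1) (ball 0 1) :=
  fun _ hz => mem_ball_zero_iff.2 (norm_mobius_lt_one hw (mem_ball_zero_iff.1 hz))

lemma differentiableOn_mobius {w : ℂ} (hw : ‖w‖ < 1) :
    DifferentiableOn ℂ (mobius w) (ball 0 1) :=
  DifferentiableOn.div (by fun_prop) (by fun_prop)
    fun z hz => one_sub_conj_mul_ne_zero hw (mem_ball_zero_iff.1 hz).le

theorem schwarz_pick {f : ℂ → ℂ} (hf : DifferentiableOn ℂ f (ball 0 1))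
    (hmaps : MapsTo f (ball 0 1) (ball 0 1)) {z w : ℂ} (hz : z ∈ ball 0 1)
    (hw : w ∈ ball 0 1) :
    ‖f w - f z‖ * ‖1 - conj w * z‖ ≤ ‖w - z‖ * ‖1 - conj (f w) * f z‖ := by
  rw [mem_ball_zero_iff] at hz hw
  have hfz := mem_ball_zero_iff.1 (hmaps (mem_ball_zero_iff.2 hz))
  have hfw := mem_ball_zero_iff.1 (hmaps (mem_ball_zero_iff.2 hw))
  -- Schwarz's lemma for the self-map `mobius (f w) ∘ f ∘ mobius w` of the disc fixing `0`.
  have hschwarz : ‖mobius (f w) (f (mobius w (mobius w z)))‖ ≤ ‖mobius w z‖ :=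
    Complex.norm_le_norm_of_mapsTo_ball
      ((differentiableOn_mobius hfw).comp (hf.comp (differentiableOn_mobius hw) (mapsTo_mobius hw))
        (hmaps.comp (mapsTo_mobius hw)))
      (((mapsTo_mobius hfw).comp (hmaps.comp (mapsTo_mobius hw))).mono_right
        ball_subset_closedBall)
      (by simp [mobius_zero, mobius_self]) (norm_mobius_lt_one hw hz)
  rwa [mobius_mobius hw hz, mobius, mobius, norm_div, norm_div,
    div_le_div_iff₀ (norm_pos_iff.2 (one_sub_conj_mul_ne_zero hfw hfz.le))
      (norm_pos_iff.2 (one_sub_conj_mul_ne_zero hw hz.le))] at hschwarz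

theorem schwarz_pick_sq {f : ℂ → ℂ} (hf : DifferentiableOn ℂ f (ball 0 1))
    (hmaps : MapsTo f (ball 0 1) (ball 0 1)) {z w : ℂ} (hz : z ∈ ball 0 1)
    (hw : w ∈ ball 0 1) :
    (1 - ‖w‖ ^ 2) * (1 - ‖z‖ ^ 2) * ‖1 - conj (f w) * f z‖ ^ 2
      ≤ (1 - ‖f w‖ ^ 2) * (1 - ‖f z‖ ^ 2) * ‖1 - conj w * z‖ ^ 2 := by
  have h := schwarz_pick hf hmaps hz hw
  have hsq := pow_le_pow_left₀ (by positivity) h 2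
  have e₁ := norm_one_sub_conj_mul_sq w z
  have e₂ := norm_one_sub_conj_mul_sq (f w) (f z)
  nlinarith

lemma norm_one_sub_conj_mul_of_norm_eq_one {τ : ℂ} (hτ : ‖τ‖ = 1) (x : ℂ) :
    ‖1 - conj τ * x‖ = ‖τ - x‖ := by
  have hττ : τ * conj τ = 1 := by
    rw [Complex.mul_conj, Complex.normSq_eq_norm_sq, hτ]
    norm_num
  calc ‖1 - conj τ * x‖ = ‖τ * (1 - conj τ * x)‖ := by rw [norm_mul, hτ, one_mul]
    _ = ‖τ - x‖ := by congr 1; linear_combination (-x) * hττ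

/-- Julia's lemma, with the angular derivative given along a sequence `w k → σ`. -/
theorem julia {f : ℂ → ℂ} (hf : DifferentiableOn ℂ f (ball 0 1))
    (hmaps : MapsTo f (ball 0 1) (ball 0 1)) {σ τ : ℂ} (hσ : ‖σ‖ = 1) (hτ : ‖τ‖ = 1) {α : ℝ}
    {w : ℕ → ℂ} (hw : ∀ k, w k ∈ ball 0 1) (hwσ : Tendsto w atTop (𝓝 σ))
    (hfw : Tendsto (fun k => f (w k)) atTop (𝓝 τ))
    (hα : Tendsto (fun k => (1 - ‖f (w k)‖ ^ 2) / (1 - ‖w k‖ ^ 2)) atTop (𝓝 α))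
    {z : ℂ} (hz : z ∈ ball 0 1) :
    (1 - ‖z‖ ^ 2) * ‖τ - f z‖ ^ 2 ≤ α * (‖σ - z‖ ^ 2 * (1 - ‖f z‖ ^ 2)) := by
  have hstep : ∀ k, (1 - ‖z‖ ^ 2) * ‖1 - conj (f (w k)) * f z‖ ^ 2
      ≤ (1 - ‖f (w k)‖ ^ 2) / (1 - ‖w k‖ ^ 2) * (‖1 - conj (w k) * z‖ ^ 2 * (1 - ‖f z‖ ^ 2)) := by
    intro k
    have hpos : 0 < 1 - ‖w k‖ ^ 2 := by
      nlinarith [mem_ball_zero_iff.1 (hw k), norm_nonneg (w k)]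
    rw [div_mul_eq_mul_div, le_div_iff₀ hpos]
    linarith [schwarz_pick_sq hf hmaps hz (hw k)]
  have hlim : ∀ {v : ℕ → ℂ} {ν : ℂ} (x : ℂ), Tendsto v atTop (𝓝 ν) →
      Tendsto (fun k => ‖1 - conj (v k) * x‖ ^ 2) atTop (𝓝 (‖1 - conj ν * x‖ ^ 2)) :=
    fun x hv => ((continuous_const.sub (Complex.continuous_conj.mul continuous_const)).norm.pow 2
      |>.tendsto _).comp hv
  have := le_of_tendsto_of_tendsto' ((hlim (f z) hfw).const_mul _)
    (hα.mul ((hlim z hwσ).mul_const _)) hstep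
  rwa [norm_one_sub_conj_mul_of_norm_eq_one hτ, norm_one_sub_conj_mul_of_norm_eq_one hσ] at this

def radial (σ : ℂ) (k : ℕ) : ℂ := ((1 - ((k : ℝ) + 2)⁻¹ : ℝ) : ℂ) * σ

lemma norm_radial {σ : ℂ} (hσ : ‖σ‖ = 1) (k : ℕ) : ‖radial σ k‖ = 1 - ((k : ℝ) + 2)⁻¹ := by
  have : ((k : ℝ) + 2)⁻¹ ≤ 1 := inv_le_one_of_one_le₀ (by linarith [k.cast_nonneg (α := ℝ)])
  rw [radial, norm_mul, hσ, mul_one, Complex.norm_real, Real.norm_of_nonneg (by linarith)]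

lemma radial_mem_ball {σ : ℂ} (hσ : ‖σ‖ = 1) (k : ℕ) : radial σ k ∈ ball 0 1 := by
  rw [mem_ball_zero_iff, norm_radial hσ]
  linarith [show 0 < ((k : ℝ) + 2)⁻¹ by positivity]

lemma radial_ne {σ : ℂ} (hσ : ‖σ‖ = 1) (k : ℕ) : radial σ k ≠ σ := fun h =>
  (mem_ball_zero_iff.1 (radial_mem_ball hσ k)).ne (by rw [h, hσ])

lemma tendsto_inv_natCast_add_two : Tendsto (fun k : ℕ => ((k : ℝ) + 2)⁻¹) atTop (𝓝 0) :=
  (tendsto_atTop_add_const_right atTop 2 tendsto_natCast_atTop_atTop).inv_tendsto_atTop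

lemma tendsto_radial {σ : ℂ} (hσ : ‖σ‖ = 1) : Tendsto (radial σ) atTop (𝓝[≠] σ) := by
  refine tendsto_nhdsWithin_iff.2 ⟨?_, .of_forall (radial_ne hσ)⟩
  have := ((Complex.continuous_ofReal.tendsto _).comp
    (tendsto_const_nhds (x := (1 : ℝ)) |>.sub tendsto_inv_natCast_add_two)).mul_const σ
  unfold radial
  simpa using this

lemma julia_quotient_eq {f : ℂ → ℂ} {σ : ℂ} (hσ : ‖σ‖ = 1) (hfix : f σ = σ) {s : ℝ}
    (hs : s ≠ 0) :
    (1 - ‖f ((1 - s : ℝ) * σ)‖ ^ 2) / (1 - ‖((1 - s : ℝ) : ℂ) * σ‖ ^ 2)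
      = (2 * (slope f σ ((1 - s : ℝ) * σ)).re - s * Complex.normSq (slope f σ ((1 - s : ℝ) * σ)))
        / (2 - s) := by
  set E := slope f σ ((1 - s : ℝ) * σ) with hE
  have hf : f ((1 - s : ℝ) * σ) = σ * (1 - s * E) := by
    have := sub_smul_slope f σ ((1 - s : ℝ) * σ)
    rw [smul_eq_mul, vsub_eq_sub, hfix, ← hE] at this
    push_cast at this ⊢
    linear_combination -this
  have hnum : 1 - ‖f ((1 - s : ℝ) * σ)‖ ^ 2 = s * (2 * E.re - s * Complex.normSq E) := by
    rw [hf, norm_mul, hσ, one_mul, ← Complex.normSq_eq_norm_sq]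
    simp only [Complex.normSq_apply, Complex.sub_re, Complex.sub_im, Complex.mul_re,
      Complex.mul_im, Complex.ofReal_re, Complex.ofReal_im, Complex.one_re, Complex.one_im]
    ring
  have hden : 1 - ‖((1 - s : ℝ) : ℂ) * σ‖ ^ 2 = s * (2 - s) := by
    rw [norm_mul, hσ, mul_one, Complex.norm_real, Real.norm_eq_abs, sq_abs]
    ring
  rw [hnum, hden, mul_div_mul_left _ _ hs]

lemma tendsto_julia_quotient_radial {f : ℂ → ℂ} {σ : ℂ} (hσ : ‖σ‖ = 1) {d : ℝ}
    (hd : HasDerivAt f (d : ℂ) σ) (hfix : f σ = σ) :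
    Tendsto (fun k => (1 - ‖f (radial σ k)‖ ^ 2) / (1 - ‖radial σ k‖ ^ 2)) atTop (𝓝 d) := by
  have hE := (hasDerivAt_iff_tendsto_slope.1 hd).comp (tendsto_radial hσ)
  refine .congr
    (fun k => (julia_quotient_eq hσ hfix (s := ((k : ℝ) + 2)⁻¹) (by positivity)).symm) ?_
  have hlim := ((tendsto_const_nhds (x := (2 : ℝ)).mul ((Complex.continuous_re.tendsto _).comp
    hE)).sub (tendsto_inv_natCast_add_two.mul ((Complex.continuous_normSq.tendsto _).comp hE))).div
    ((tendsto_const_nhds (x := (2 : ℝ))).sub tendsto_inv_natCast_add_two) (by norm_num)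
  rwa [show (2 * (d : ℂ).re - 0 * Complex.normSq d) / (2 - 0) = d by simp] at hlim

theorem julia_of_hasDerivAt {f : ℂ → ℂ} (hf : DifferentiableOn ℂ f (ball 0 1))
    (hmaps : MapsTo f (ball 0 1) (ball 0 1)) {σ : ℂ} (hσ : ‖σ‖ = 1) {d : ℝ}
    (hd : HasDerivAt f (d : ℂ) σ) (hfix : f σ = σ) {z : ℂ} (hz : z ∈ ball 0 1) :
    (1 - ‖z‖ ^ 2) * ‖σ - f z‖ ^ 2 ≤ d * (‖σ - z‖ ^ 2 * (1 - ‖f z‖ ^ 2)) := by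
  have hrad := (tendsto_radial hσ).mono_right nhdsWithin_le_nhds
  have hfrad := hd.continuousAt.tendsto.comp hrad
  rw [hfix] at hfrad
  exact julia hf hmaps hσ hσ (radial_mem_ball hσ) hrad hfrad
    (tendsto_julia_quotient_radial hσ hd hfix) hz

lemma exists_ne_apply_eq_of_sub_eq_pow_mul {f g : ℂ → ℂ} {z₀ : ℂ} {n : ℕ} (hn : 2 ≤ n)
    (hg : AnalyticAt ℂ g z₀) (hg₀ : g z₀ ≠ 0)
    (hfg : ∀ᶠ z in 𝓝 z₀, f z - f z₀ = (z - z₀) ^ n * g z) {U : Set ℂ} (hU : U ∈ 𝓝 z₀) :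
    ∃ z₁ ∈ U, ∃ z₂ ∈ U, z₁ ≠ z₂ ∧ f z₁ = f z₂ := by
  have hn₀ : n ≠ 0 := by omega
  -- `f - f z₀ = g z₀ * H ^ n` with `H` a local coordinate at `z₀`, so `f` takes the same value
  -- at the `H`-preimages of `t` and `t * ω`, `ω` a primitive `n`-th root of unity.
  set H : ℂ → ℂ := fun z => (z - z₀) * (g z / g z₀) ^ (n⁻¹ : ℂ)
  have hH : HasStrictDerivAt H 1 z₀ := by
    have hr : AnalyticAt ℂ (fun z => (g z / g z₀) ^ (n⁻¹ : ℂ)) z₀ :=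
      (hg.div analyticAt_const hg₀).cpow analyticAt_const (by simp [hg₀])
    simpa [hg₀] using
      HasStrictDerivAt.fun_mul ((hasStrictDerivAt_id z₀).sub_const z₀) hr.hasStrictDerivAt
  have hfH : ∀ᶠ z in 𝓝 z₀, f z - f z₀ = g z₀ * H z ^ n := hfg.mono fun z hz => by
    rw [hz, mul_pow, Complex.cpow_nat_inv_pow _ hn₀]
    field_simp
  have himage : H '' ({z | f z - f z₀ = g z₀ * H z ^ n} ∩ U) ∈ 𝓝 0 := by
    have := image_mem_map (m := H) (inter_mem hfH hU)
    rwa [hH.map_nhds_eq one_ne_zero, show H z₀ = 0 by simp [H]] at this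
  obtain ⟨ε, hε, hball⟩ := Metric.mem_nhds_iff.1 himage
  have hω := Complex.isPrimitiveRoot_exp n hn₀
  set ω := Complex.exp (2 * Real.pi * Complex.I / n)
  set t : ℂ := ((ε / 2 : ℝ) : ℂ)
  have ht : ‖t‖ < ε := by
    rw [Complex.norm_real, Real.norm_of_nonneg (by positivity)]
    linarith
  obtain ⟨z₁, ⟨hfz₁, hz₁⟩, hHz₁⟩ := hball (mem_ball_zero_iff.2 ht)
  obtain ⟨z₂, ⟨hfz₂, hz₂⟩, hHz₂⟩ := hball (mem_ball_zero_iff.2 (show ‖t * ω‖ < ε by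
    rwa [norm_mul, hω.norm'_eq_one hn₀, mul_one]))
  refine ⟨z₁, hz₁, z₂, hz₂, ?_, ?_⟩
  · rintro rfl
    have ht₀ : t ≠ 0 := by simp [t, hε.ne']
    exact hω.ne_one (by omega) (mul_left_cancel₀ ht₀ (by rw [mul_one, ← hHz₂, hHz₁]))
  · have h₁ : f z₁ - f z₀ = g z₀ * t ^ n := by rw [hfz₁, hHz₁]
    have h₂ : f z₂ - f z₀ = g z₀ * t ^ n := by rw [hfz₂, hHz₂, mul_pow, hω.pow_eq_one, mul_one]
    linear_combination h₁ - h₂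

theorem deriv_ne_zero_of_injOn {f : ℂ → ℂ} {U : Set ℂ} (hU : IsOpen U)
    (hf : DifferentiableOn ℂ f U) (hinj : InjOn f U) {z₀ : ℂ} (hz₀ : z₀ ∈ U) :
    deriv f z₀ ≠ 0 := by
  intro hd
  have han : AnalyticAt ℂ f z₀ := hf.analyticAt (hU.mem_nhds hz₀)
  have hfin : analyticOrderAt (f · - f z₀) z₀ ≠ ⊤ := by
    intro htop
    obtain ⟨z, ⟨hz, hzU⟩, hne⟩ := ((((analyticOrderAt_eq_top.1 htop).and
      (hU.mem_nhds hz₀)).filter_mono nhdsWithin_le_nhds).and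
      (self_mem_nhdsWithin (s := {z₀}ᶜ))).exists
    exact hne (hinj hzU hz₀ (sub_eq_zero.1 hz))
  have horder := Nat.cast_analyticOrderNatAt hfin
  have hn : 2 ≤ analyticOrderNatAt (f · - f z₀) z₀ := by
    have hderiv : analyticOrderAt (deriv f) z₀ ≠ 0 := by
      simpa [han.deriv.analyticOrderAt_eq_zero] using hd
    have : (2 : ℕ∞) ≤ analyticOrderAt (f · - f z₀) z₀ := by
      rw [← han.analyticOrderAt_deriv_add_one]
      calc (2 : ℕ∞) = 1 + 1 := by norm_num
        _ ≤ _ := by gcongr; exact Order.one_le_iff_ne_zero.2 hderiv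
    exact_mod_cast horder ▸ this
  obtain ⟨g, hg, hg₀, hfg⟩ :=
    ((han.sub analyticAt_const).analyticOrderAt_eq_natCast).1 horder.symm
  obtain ⟨z₁, hz₁, z₂, hz₂, hne, heq⟩ :=
    exists_ne_apply_eq_of_sub_eq_pow_mul hn hg hg₀ (by simpa using hfg) (hU.mem_nhds hz₀)
  exact hne (hinj hz₁ hz₂ heq)

theorem differentiableOn_invFunOn {f : ℂ → ℂ} {U V : Set ℂ} (hU : IsOpen U)
    (hf : DifferentiableOn ℂ f U) (hbij : BijOn f U V) :
    DifferentiableOn ℂ (Function.invFunOn f U) V := by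
  intro w hw
  obtain ⟨z, hz, rfl⟩ := hbij.surjOn hw
  have hleft : ∀ᶠ x in 𝓝 z, Function.invFunOn f U (f x) = x :=
    eventually_of_mem (hU.mem_nhds hz) fun x hx => hbij.injOn.leftInvOn_invFunOn hx
  exact (HasStrictDerivAt.hasDerivAt
    ((hf.analyticAt (hU.mem_nhds hz)).hasStrictDerivAt.to_local_left_inverse
      (deriv_ne_zero_of_injOn hU hf hbij.injOn hz) hleft)).differentiableAt.differentiableWithinAt

lemma norm_sub_pos_of_norm_eq_one {σ z : ℂ} (hσ : ‖σ‖ = 1) (hz : z ∈ ball 0 1) :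
    0 < ‖σ - z‖ :=
  norm_pos_iff.2 (sub_ne_zero.2 fun h => (mem_ball_zero_iff.1 hz).ne (h ▸ hσ))

lemma norm_sub_le_two_of_norm_eq_one {σ z : ℂ} (hσ : ‖σ‖ = 1) (hz : z ∈ ball 0 1) :
    ‖σ - z‖ ≤ 2 := by
  linarith [norm_sub_le σ z, mem_ball_zero_iff.1 hz]

lemma card_le_of_forall_lt_add {s : Finset ℕ} {M : ℕ} (h : ∀ i ∈ s, ∀ j ∈ s, j < i + M) :
    s.card ≤ M := by
  rcases s.eq_empty_or_nonempty with rfl | hs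
  · simp
  calc s.card ≤ (Finset.Ico (s.min' hs) (s.min' hs + M)).card :=
        Finset.card_le_card fun j hj =>
          Finset.mem_Ico.2 ⟨s.min'_le j hj, h _ (s.min'_mem hs) j hj⟩
    _ = M := by simp

lemma pow_mul_pow_le_prod {ι : Type*} {s : Finset ι} {x : ι → ℝ} (p : ι → Prop) [DecidablePred p]
    {c ρ : ℝ} {M : ℕ} (hc : 0 < c) (hρ : 0 < ρ) (hM : (s.filter p).card ≤ M)
    (hcx : ∀ i ∈ s, c ≤ x i) (hρx : ∀ i ∈ s, ¬p i → ρ ≤ x i) :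
    min (c / ρ) 1 ^ M * ρ ^ s.card ≤ ∏ i ∈ s, x i := by
  set m := min (c / ρ) 1
  have hm : 0 ≤ m := le_min (div_pos hc hρ).le zero_le_one
  calc m ^ M * ρ ^ s.card ≤ m ^ (s.filter p).card * ρ ^ s.card :=
        mul_le_mul_of_nonneg_right (pow_le_pow_of_le_one hm (min_le_right _ _) hM) (by positivity)
    _ = ∏ i ∈ s, ρ * (if p i then m else 1) := by
        rw [Finset.prod_mul_distrib, Finset.prod_const, Finset.prod_ite, Finset.prod_const,
          Finset.prod_const_one, mul_one, mul_comm]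
    _ ≤ ∏ i ∈ s, x i := by
        refine Finset.prod_le_prod (fun i _ => by positivity) fun i hi => ?_
        split_ifs with hpi
        · calc ρ * m ≤ ρ * (c / ρ) := by gcongr; exact min_le_left _ _
            _ = c := mul_div_cancel₀ _ hρ.ne'
            _ ≤ x i := hcx i hi
        · simpa using hρx i hi hpi

lemma exists_tendsto_rpow_one_div_of_supermultiplicative {v : ℕ → ℝ} {C : ℝ}
    (hpos : ∀ n, 0 < v n) (hmul : ∀ m n, v m * v n ≤ v (m + n)) (hC : ∀ n, v n ≤ C ^ n) :
    ∃ L, Tendsto (fun n : ℕ => v n ^ (1 / (n : ℝ))) atTop (𝓝 L) := by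
  have hsub : Subadditive fun n => -Real.log (v n) := fun m n => by
    rw [← neg_add, neg_le_neg_iff, ← Real.log_mul (hpos m).ne' (hpos n).ne']
    exact Real.log_le_log (mul_pos (hpos m) (hpos n)) (hmul m n)
  have hbdd : BddBelow (range fun n => -Real.log (v n) / n) := by
    refine ⟨min (-Real.log C) 0, ?_⟩
    rintro _ ⟨n, rfl⟩
    rcases n.eq_zero_or_pos with rfl | hn
    · simp
    have hlog := Real.log_le_log (hpos n) (hC n)
    rw [Real.log_pow] at hlog
    rw [le_div_iff₀ (by positivity)]
    nlinarith [min_le_left (-Real.log C) 0, (n.cast_pos (α := ℝ)).2 hn]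
  refine ⟨Real.exp (-hsub.lim), ((Real.continuous_exp.tendsto _).comp
    (hsub.tendsto_lim hbdd).neg).congr fun n => ?_⟩
  rw [Function.comp_apply, Real.rpow_def_of_pos (hpos n)]
  ring_nf

lemma le_of_mul_pow_le_of_tendsto_rpow_one_div {v : ℕ → ℝ} {K ρ L : ℝ} (hK : 0 < K)
    (hρ : 0 ≤ ρ) (hv : ∀ n, K * ρ ^ n ≤ v n)
    (hL : Tendsto (fun n : ℕ => v n ^ (1 / (n : ℝ))) atTop (𝓝 L)) : ρ ≤ L := by
  have hK1 : Tendsto (fun n : ℕ => K ^ (1 / (n : ℝ)) * ρ) atTop (𝓝 (1 * ρ)) := by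
    have := (tendsto_const_nhds (x := K)).rpow tendsto_one_div_atTop_nhds_zero_nat (.inl hK.ne')
    rw [Real.rpow_zero] at this
    exact this.mul_const ρ
  refine one_mul ρ ▸ le_of_tendsto_of_tendsto hK1 hL ((eventually_ne_atTop 0).mono fun n hn => ?_)
  calc K ^ (1 / (n : ℝ)) * ρ = (K * ρ ^ n) ^ (1 / (n : ℝ)) := by
        rw [Real.mul_rpow hK.le (by positivity), one_div, Real.pow_rpow_inv_natCast hρ hn]
    _ ≤ v n ^ (1 / (n : ℝ)) := Real.rpow_le_rpow (by positivity) (hv n) (by positivity)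

lemma prod_range_add_iterate {α M : Type*} [CommMonoid M] (f : α → α) (u : α → M) (m n : ℕ)
    (z : α) :
    ∏ j ∈ Finset.range (m + n), u (f^[j] z)
      = (∏ j ∈ Finset.range m, u (f^[j] z)) * ∏ j ∈ Finset.range n, u (f^[j] (f^[m] z)) := by
  rw [Finset.prod_range_add]
  simp only [← Function.iterate_add_apply, add_comm]

namespace HypAuto

variable (h : HypAuto) {u : ℂ → ℂ}

lemma differentiableOn_ψ : DifferentiableOn ℂ h.ψ (ball 0 1) := by
  obtain ⟨R, hR, hd⟩ := h.holo
  exact hd.mono (ball_subset_ball hR.le)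

lemma differentiableAt_ψ {σ : ℂ} (hσ : ‖σ‖ = 1) : DifferentiableAt ℂ h.ψ σ := by
  obtain ⟨R, hR, hd⟩ := h.holo
  exact hd.differentiableAt (isOpen_ball.mem_nhds (by rwa [mem_ball_zero_iff, hσ]))

lemma hasDerivAt_a : HasDerivAt h.ψ (h.da : ℂ) h.a :=
  h.hda ▸ (h.differentiableAt_ψ h.ha).hasDerivAt

lemma hasDerivAt_b : HasDerivAt h.ψ (h.db : ℂ) h.b :=
  h.hdb ▸ (h.differentiableAt_ψ h.hb).hasDerivAt

lemma db_pos : 0 < h.db := one_pos.trans h.hdb1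

lemma iterate_mem_ball {z : ℂ} (hz : z ∈ ball 0 1) (n : ℕ) : h.ψ^[n] z ∈ ball 0 1 :=
  h.bij.mapsTo.iterate n hz

lemma julia_a {z : ℂ} (hz : z ∈ ball 0 1) :
    (1 - ‖z‖ ^ 2) * ‖h.a - h.ψ z‖ ^ 2 ≤ h.da * (‖h.a - z‖ ^ 2 * (1 - ‖h.ψ z‖ ^ 2)) :=
  julia_of_hasDerivAt h.differentiableOn_ψ h.bij.mapsTo h.ha h.hasDerivAt_a h.fixa hz

/-- Julia's lemma for `ψ⁻¹`, whose angular derivative at `b` is `1 / db = da`. -/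
lemma julia_b {z : ℂ} (hz : z ∈ ball 0 1) :
    (1 - ‖h.ψ z‖ ^ 2) * ‖h.b - z‖ ^ 2 ≤ h.da * (‖h.b - h.ψ z‖ ^ 2 * (1 - ‖z‖ ^ 2)) := by
  set Ψ := Function.invFunOn h.ψ (ball 0 1) with hΨ
  have hΨψ : ∀ x ∈ ball (0 : ℂ) 1, Ψ (h.ψ x) = x := fun x hx => h.bij.injOn.leftInvOn_invFunOn hx
  have hrad := (tendsto_radial h.hb).mono_right nhdsWithin_le_nhds
  have hψrad := h.hasDerivAt_b.continuousAt.tendsto.comp hrad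
  rw [h.fixb] at hψrad
  have hquot : Tendsto (fun k => (1 - ‖Ψ (h.ψ (radial h.b k))‖ ^ 2)
      / (1 - ‖h.ψ (radial h.b k)‖ ^ 2)) atTop (𝓝 h.da) := by
    have := (tendsto_julia_quotient_radial h.hb h.hasDerivAt_b h.fixb).inv₀ h.db_pos.ne'
    rw [← eq_inv_of_mul_eq_one_left h.hmulder] at this
    exact this.congr fun k => by rw [inv_div, hΨψ _ (radial_mem_ball h.hb k)]
  have := julia (differentiableOn_invFunOn isOpen_ball h.differentiableOn_ψ h.bij)
    h.bij.surjOn.mapsTo_invFunOn h.hb h.hb (fun k => h.bij.mapsTo (radial_mem_ball h.hb k))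
    hψrad (hrad.congr fun k => (hΨψ _ (radial_mem_ball h.hb k)).symm) hquot (h.bij.mapsTo hz)
  rwa [← hΨ, hΨψ z hz] at this

lemma db_mul_norm_sub_mul_le {z : ℂ} (hz : z ∈ ball 0 1) :
    h.db * (‖h.a - h.ψ z‖ * ‖h.b - z‖) ≤ ‖h.a - z‖ * ‖h.b - h.ψ z‖ := by
  have hP : 0 < 1 - ‖z‖ ^ 2 := by nlinarith [mem_ball_zero_iff.1 hz, norm_nonneg z]
  have hQ : 0 < 1 - ‖h.ψ z‖ ^ 2 := by
    nlinarith [mem_ball_zero_iff.1 (h.bij.mapsTo hz), norm_nonneg (h.ψ z)]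
  have hda := h.hda1.1
  have hsq : (‖h.a - h.ψ z‖ * ‖h.b - z‖) ^ 2 ≤ (h.da * (‖h.a - z‖ * ‖h.b - h.ψ z‖)) ^ 2 := by
    refine le_of_mul_le_mul_left ?_ (mul_pos hP hQ)
    convert mul_le_mul (h.julia_a hz) (h.julia_b hz) (by positivity) (by positivity) using 1 <;>
      ring
  calc h.db * (‖h.a - h.ψ z‖ * ‖h.b - z‖)
      ≤ h.db * (h.da * (‖h.a - z‖ * ‖h.b - h.ψ z‖)) := by
        refine mul_le_mul_of_nonneg_left ?_ h.db_pos.le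
        exact (pow_le_pow_iff_left₀ (by positivity) (by positivity) two_ne_zero).1 hsq
    _ = ‖h.a - z‖ * ‖h.b - h.ψ z‖ := by rw [← mul_assoc, mul_comm h.db, h.hmulder, one_mul]

def distRatio (w : ℂ) : ℝ := ‖h.b - w‖ / ‖h.a - w‖

lemma db_mul_distRatio_le {z : ℂ} (hz : z ∈ ball 0 1) :
    h.db * h.distRatio z ≤ h.distRatio (h.ψ z) := by
  rw [distRatio, distRatio, ← mul_div_assoc, div_le_div_iff₀ (norm_sub_pos_of_norm_eq_one h.ha hz)
    (norm_sub_pos_of_norm_eq_one h.ha (h.bij.mapsTo hz))]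
  linarith [h.db_mul_norm_sub_mul_le hz]

lemma db_pow_mul_distRatio_le {z : ℂ} (hz : z ∈ ball 0 1) (k : ℕ) :
    h.db ^ k * h.distRatio z ≤ h.distRatio (h.ψ^[k] z) := by
  induction k with
  | zero => simp
  | succ k ih =>
    rw [Function.iterate_succ_apply', pow_succ', mul_assoc]
    exact (mul_le_mul_of_nonneg_left ih h.db_pos.le).trans
      (h.db_mul_distRatio_le (h.iterate_mem_ball hz k))

lemma lt_add_of_notMem_ball {z : ℂ} (hz : z ∈ ball 0 1) {δ : ℝ} (hδ : 0 < δ) {M : ℕ}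
    (hM : 4 / δ ^ 2 < h.db ^ M) {i j : ℕ} (hi : h.ψ^[i] z ∉ ball h.b δ)
    (hj : h.ψ^[j] z ∉ ball h.a δ) : j < i + M := by
  by_contra! hij
  have hw := h.iterate_mem_ball hz i
  have hwj : h.ψ^[j - i] (h.ψ^[i] z) = h.ψ^[j] z := by
    rw [← Function.iterate_add_apply, Nat.sub_add_cancel (by omega)]
  rw [mem_ball, dist_comm, dist_eq_norm, not_lt] at hi hj
  have hlow : δ / 2 ≤ h.distRatio (h.ψ^[i] z) := by
    rw [distRatio, le_div_iff₀ (norm_sub_pos_of_norm_eq_one h.ha hw)]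
    nlinarith [norm_sub_le_two_of_norm_eq_one h.ha hw]
  have hup : h.distRatio (h.ψ^[j] z) * δ ≤ 2 := by
    rw [distRatio, div_mul_eq_mul_div, div_le_iff₀ (by linarith)]
    nlinarith [norm_sub_le_two_of_norm_eq_one h.hb (h.iterate_mem_ball hz j)]
  have hgrow : h.db ^ (j - i) * (δ / 2) ≤ h.distRatio (h.ψ^[j] z) :=
    (mul_le_mul_of_nonneg_left hlow (pow_pos h.db_pos _).le).trans
      (hwj ▸ h.db_pow_mul_distRatio_le hw _)
  have hpow : h.db ^ M * δ ^ 2 ≤ h.db ^ (j - i) * δ ^ 2 :=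
    mul_le_mul_of_nonneg_right (pow_le_pow_right₀ h.hdb1.le (by omega)) (by positivity)
  rw [div_lt_iff₀ (by positivity)] at hM
  nlinarith [mul_le_mul_of_nonneg_right hgrow hδ.le]

def infWeight (u : ℂ → ℂ) (n : ℕ) : ℝ :=
  sInf ((fun z => ‖∏ j ∈ Finset.range n, u (h.ψ^[j] z)‖) '' ball (0 : ℂ) 1)

lemma infWeight_le_norm {z : ℂ} (hz : z ∈ ball 0 1) (n : ℕ) :
    h.infWeight u n ≤ ‖∏ j ∈ Finset.range n, u (h.ψ^[j] z)‖ :=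
  csInf_le ⟨0, forall_mem_image.2 fun _ _ => norm_nonneg _⟩ (mem_image_of_mem _ hz)

lemma le_infWeight {K : ℝ} {n : ℕ}
    (hK : ∀ z ∈ ball (0 : ℂ) 1, K ≤ ‖∏ j ∈ Finset.range n, u (h.ψ^[j] z)‖) :
    K ≤ h.infWeight u n :=
  le_csInf ((nonempty_ball.2 one_pos).image _) (forall_mem_image.2 hK)

lemma pow_le_infWeight {c : ℝ} (hc : 0 ≤ c) (hcu : ∀ z ∈ ball (0 : ℂ) 1, c ≤ ‖u z‖) (n : ℕ) :
    c ^ n ≤ h.infWeight u n :=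
  h.le_infWeight fun z hz => by
    simpa [norm_prod] using Finset.prod_le_prod (s := Finset.range n) (fun _ _ => hc)
      fun j _ => hcu _ (h.iterate_mem_ball hz j)

lemma infWeight_le_pow {C : ℝ} (hCu : ∀ z ∈ ball (0 : ℂ) 1, ‖u z‖ ≤ C) (n : ℕ) :
    h.infWeight u n ≤ C ^ n := by
  have h0 : (0 : ℂ) ∈ ball 0 1 := mem_ball_self one_pos
  refine (h.infWeight_le_norm h0 n).trans ?_
  simpa [norm_prod] using Finset.prod_le_prod (s := Finset.range n) (fun _ _ => norm_nonneg _)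
    fun j _ => hCu _ (h.iterate_mem_ball h0 j)

lemma infWeight_mul_le {c : ℝ} (hc : 0 ≤ c) (hcu : ∀ z ∈ ball (0 : ℂ) 1, c ≤ ‖u z‖) (m n : ℕ) :
    h.infWeight u m * h.infWeight u n ≤ h.infWeight u (m + n) :=
  h.le_infWeight fun z hz => by
    rw [prod_range_add_iterate, norm_mul]
    exact mul_le_mul (h.infWeight_le_norm hz m) (h.infWeight_le_norm (h.iterate_mem_ball hz m) n)
      ((pow_nonneg hc n).trans (h.pow_le_infWeight hc hcu n)) (norm_nonneg _)

theorem exists_pos_mul_pow_le_infWeight {c ρ : ℝ} (hc : 0 < c)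
    (hcu : ∀ z ∈ ball (0 : ℂ) 1, c ≤ ‖u z‖) (hρ : 0 < ρ)
    (hρa : ρ < liminf (fun z => ‖u z‖) (𝓝[ball 0 1] h.a))
    (hρb : ρ < liminf (fun z => ‖u z‖) (𝓝[ball 0 1] h.b)) :
    ∃ K > 0, ∀ n, K * ρ ^ n ≤ h.infWeight u n := by
  classical
  have hbdd {σ : ℂ} : IsBoundedUnder (· ≥ ·) (𝓝[ball 0 1] σ) fun z => ‖u z‖ :=
    isBoundedUnder_of ⟨0, fun z => norm_nonneg _⟩
  obtain ⟨δa, hδa, ha⟩ :=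
    Metric.nhdsWithin_basis_ball.eventually_iff.1 (eventually_lt_of_lt_liminf hρa hbdd)
  obtain ⟨δb, hδb, hb⟩ :=
    Metric.nhdsWithin_basis_ball.eventually_iff.1 (eventually_lt_of_lt_liminf hρb hbdd)
  set δ := min δa δb
  obtain ⟨M, hM⟩ := pow_unbounded_of_one_lt (4 / δ ^ 2) h.hdb1
  refine ⟨min (c / ρ) 1 ^ M, by positivity, fun n => h.le_infWeight fun z hz => ?_⟩
  rw [norm_prod]
  have hcard : ((Finset.range n).filter
      fun j => h.ψ^[j] z ∉ ball h.a δ ∧ h.ψ^[j] z ∉ ball h.b δ).card ≤ M :=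
    card_le_of_forall_lt_add fun i hi j hj => h.lt_add_of_notMem_ball hz (by positivity) hM
      (Finset.mem_filter.1 hi).2.2 (Finset.mem_filter.1 hj).2.1
  simpa using pow_mul_pow_le_prod _ hc hρ hcard (fun j _ => hcu _ (h.iterate_mem_ball hz j))
    fun j _ hj => by
      rcases not_and_or.1 hj with hja | hjb
      · exact (ha ⟨ball_subset_ball (min_le_left _ _) (not_not.1 hja),
          h.iterate_mem_ball hz j⟩).le
      · exact (hb ⟨ball_subset_ball (min_le_right _ _) (not_not.1 hjb),
          h.iterate_mem_ball hz j⟩).le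

end HypAuto

theorem inf_iterated_weight_limit_general (h : HypAuto)
    (u : ℂ → ℂ)
    (hubd : ∃ C : ℝ, ∀ z ∈ ball (0:ℂ) 1, ‖u z‖ ≤ C)
    (huaway : ∃ c : ℝ, 0 < c ∧ ∀ z ∈ ball (0:ℂ) 1, c ≤ ‖u z‖) :
    ∃ L : ℝ,
      Tendsto
        (fun n : ℕ =>
          (sInf ((fun z => ‖
            (∏ j ∈ Finset.range n, u (h.ψ^[j] z))‖) '' ball (0:ℂ) 1)) ^ (1 / (n:ℝ)))
        atTop (nhds L) ∧
      min (liminf (fun z => ‖u z‖) (nhdsWithin h.a (ball (0:ℂ) 1)))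
          (liminf (fun z => ‖u z‖) (nhdsWithin h.b (ball (0:ℂ) 1))) ≤ L := by
  obtain ⟨c, hc, hcu⟩ := huaway
  obtain ⟨C, hCu⟩ := hubd
  have hpos n : 0 < h.infWeight u n := (pow_pos hc n).trans_le (h.pow_le_infWeight hc.le hcu n)
  obtain ⟨L, hL⟩ := exists_tendsto_rpow_one_div_of_supermultiplicative hpos
    (h.infWeight_mul_le hc.le hcu) (h.infWeight_le_pow hCu)
  refine ⟨L, hL, le_of_forall_lt_imp_le_of_dense fun ρ hρ => ?_⟩
  rcases le_or_gt ρ 0 with hρ₀ | hρ₀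
  · exact hρ₀.trans (ge_of_tendsto' hL fun n => Real.rpow_nonneg (hpos n).le _)
  obtain ⟨K, hK, hKρ⟩ := h.exists_pos_mul_pow_le_infWeight hc hcu hρ₀
    (hρ.trans_le (min_le_left _ _)) (hρ.trans_le (min_le_right _ _))
  exact le_of_mul_pow_le_of_tendsto_rpow_one_div hK hρ₀.le hKρ hL

/-- With `u_n = ∏_{j=0}^{n-1} u∘ψ_j`, the limit of `(inf_𝔻 |u_n|)^{1/n}` exists
and is at least `min{A⁻, B⁻}`, where `A⁻ = liminf_{𝔻∋z→a} |u z|` and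
`B⁻ = liminf_{𝔻∋z→b} |u z|`. -/
theorem inf_iterated_weight_limit (h : HypAuto)
    (u : ℂ → ℂ) (hu : DifferentiableOn ℂ u (ball (0:ℂ) 1))
    (hubd : ∃ C : ℝ, ∀ z ∈ ball (0:ℂ) 1, ‖u z‖ ≤ C)
    (huaway : ∃ c : ℝ, 0 < c ∧ ∀ z ∈ ball (0:ℂ) 1, c ≤ ‖u z‖) :
    ∃ L : ℝ,
      Tendsto
        (fun n : ℕ =>
          (sInf ((fun z => ‖
            (∏ j ∈ Finset.range n, u (h.ψ^[j] z))‖) '' ball (0:ℂ) 1)) ^ (1 / (n:ℝ)))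
        atTop (nhds L) ∧
      min (liminf (fun z => ‖u z‖) (nhdsWithin h.a (ball (0:ℂ) 1)))
          (liminf (fun z => ‖u z‖) (nhdsWithin h.b (ball (0:ℂ) 1))) ≤ L :=
  inf_iterated_weight_limit_general h u hubd huaway
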